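/- arXiv:2501.18901 — 3 statements merged into one kernel-verified Lean document; each statement's English description precedes it below -/
import Mathlib

section
/- If two real-valued random variables X and Y have moment generating functions that exist (are finite) on an open interval around 0 and all their moments agree, i.e., E[X^n] = E[Y^n] for all natural numbers n, then X and Y have the same distribution. -/
/-!
The complex moment generating function `z ↦ E[exp (z X)]` is holomorphic on the strip
`|Re z| < ε`, and its `n`-th derivative at `0` is the moment `E[X ^ n]`. Equal moments therefore
make the two complex MGFs agree near `0`, hence on the whole (connected) strip by the identity
theorem, in particular on the imaginary axis, where they are the characteristic functions of the
two distributions.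
-/

open MeasureTheory ProbabilityTheory Filter Set Topology

theorem AnalyticAt.eventuallyEq_of_iteratedDeriv_eq {𝕜 : Type*} [NontriviallyNormedField 𝕜]
    [CompleteSpace 𝕜] [CharZero 𝕜] {f g : 𝕜 → 𝕜} {x : 𝕜}
    (hf : AnalyticAt 𝕜 f x) (hg : AnalyticAt 𝕜 g x)
    (h : ∀ n, iteratedDeriv n f x = iteratedDeriv n g x) : f =ᶠ[𝓝 x] g := by
  have hfg := hf.hasFPowerSeriesAt.sub hg.hasFPowerSeriesAt
  simp only [h, sub_self] at hfg
  filter_upwards [hfg.eventually_eq_zero] with y hy using sub_eq_zero.mp hy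

namespace ProbabilityTheory

variable {Ω Ω' : Type*} {mΩ : MeasurableSpace Ω} {mΩ' : MeasurableSpace Ω'}
  {μ : Measure Ω} {μ' : Measure Ω'} {X : Ω → ℝ} {Y : Ω' → ℝ} {ε : ℝ}

lemma Ioo_subset_interior_integrableExpSet
    (h : ∀ t : ℝ, |t| < ε → Integrable (fun ω => Real.exp (t * X ω)) μ) :
    Ioo (-ε) ε ⊆ interior (integrableExpSet X μ) :=
  isOpen_Ioo.subset_interior_iff.mpr fun t ht => h t (abs_lt.mpr ht)

lemma iteratedDeriv_complexMGF_zero (h : 0 ∈ interior (integrableExpSet X μ)) (n : ℕ) :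
    iteratedDeriv n (complexMGF X μ) 0 = ((∫ ω, X ω ^ n ∂μ : ℝ) : ℂ) := by
  rw [iteratedDeriv_complexMGF (by simpa using h) n]
  simp only [zero_mul, Complex.exp_zero, mul_one]
  exact_mod_cast integral_complex_ofReal

lemma eqOn_complexMGF_of_moments (hε : 0 < ε)
    (hX : Ioo (-ε) ε ⊆ interior (integrableExpSet X μ))
    (hY : Ioo (-ε) ε ⊆ interior (integrableExpSet Y μ'))
    (hmom : ∀ n : ℕ, ∫ ω, X ω ^ n ∂μ = ∫ ω, Y ω ^ n ∂μ') :
    EqOn (complexMGF X μ) (complexMGF Y μ') {z | z.re ∈ Ioo (-ε) ε} := by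
  have h0 : (0 : ℝ) ∈ Ioo (-ε) ε := ⟨neg_neg_of_pos hε, hε⟩
  have hXan : AnalyticOnNhd ℂ (complexMGF X μ) {z | z.re ∈ Ioo (-ε) ε} :=
    analyticOnNhd_complexMGF.mono fun z hz => hX hz
  have hYan : AnalyticOnNhd ℂ (complexMGF Y μ') {z | z.re ∈ Ioo (-ε) ε} :=
    analyticOnNhd_complexMGF.mono fun z hz => hY hz
  have hnear : complexMGF X μ =ᶠ[𝓝 0] complexMGF Y μ' :=
    (hXan 0 (by simpa using h0)).eventuallyEq_of_iteratedDeriv_eq (hYan 0 (by simpa using h0))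
      fun n => by
        rw [iteratedDeriv_complexMGF_zero (hX h0), iteratedDeriv_complexMGF_zero (hY h0), hmom]
  exact hXan.eqOn_of_preconnected_of_eventuallyEq hYan
    ((convex_Ioo (-ε) ε).linear_preimage Complex.reLm).isPreconnected (by simpa using h0) hnear

end ProbabilityTheory

/-- If two real-valued random variables have MGFs finite on an open interval around 0
and all moments agree, then they have the same distribution. -/
theorem moments_determine_distribution
    {Ω : Type*} [MeasurableSpace Ω] (μ : Measure Ω) [IsProbabilityMeasure μ]
    (X Y : Ω → ℝ) (hX : Measurable X) (hY : Measurable Y)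
    (ε : ℝ) (hε : 0 < ε)
    (hmgfX : ∀ t : ℝ, |t| < ε → Integrable (fun ω => Real.exp (t * X ω)) μ)
    (hmgfY : ∀ t : ℝ, |t| < ε → Integrable (fun ω => Real.exp (t * Y ω)) μ)
    (hmom : ∀ n : ℕ, ∫ ω, X ω ^ n ∂μ = ∫ ω, Y ω ^ n ∂μ) :
    μ.map X = μ.map Y := by
  have hstrip := eqOn_complexMGF_of_moments hε (Ioo_subset_interior_integrableExpSet hmgfX)
    (Ioo_subset_interior_integrableExpSet hmgfY) hmom
  refine Measure.ext_of_charFun (funext fun t => ?_)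
  rw [← complexMGF_mul_I hX.aemeasurable, ← complexMGF_mul_I hY.aemeasurable]
  exact hstrip (by simp [hε])
end

section
/- For probability measures μ and ν on ℝ with finite p-th moments (p ≥ 1), the p-th Wasserstein distance satisfies W_p^p(μ, ν) = ∫_0^1 |F_μ^{-1}(z) − F_ν^{-1}(z)|^p dz, where F_μ^{-1} and F_ν^{-1} are the quantile functions (generalized inverse CDFs) of μ and ν. -/
/-!
The quantile coupling, the law of `(F_μ⁻¹ U, F_ν⁻¹ U)` for `U` uniform on `(0, 1)`, has marginals
`μ` and `ν` and cost equal to the right-hand side, so it remains to show that it is optimal.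

Write `|r| ^ p = ∫₀ʳ g` with `g` the (monotone, right-continuous) right derivative of `|·| ^ p`, and
let `γ` be the Stieltjes measure of `g`. By Fubini,
`|x - y| ^ p = |x| ^ p + |y| ^ p - ∫∫ 1⟨0, y⟩(w) 1⟨0, x⟩(v + w) dw dγ(v)`, where `1⟨0, a⟩` is the
signed indicator of the oriented interval from `0` to `a`. Integrating against a coupling `π`, the
moment terms only see the marginals, and for fixed `(w, v)` the inner integral depends on `π` only
through `π (Iio (v + w) ×ˢ Iio w)`, with a positive sign. That quantity is at most
`min (μ (Iio s)) (ν (Iio t))` (Fréchet–Hoeffding), with equality for the quantile coupling because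
the sets `{z ∈ (0, 1) | F⁻¹ z < s}` are nested initial segments of `(0, 1)`.
-/

open MeasureTheory

/-- The p-th power of the p-th Wasserstein distance, defined as the infimum of transport
costs over all couplings. -/
noncomputable def WpPow {X : Type*} [MeasurableSpace X] [PseudoMetricSpace X]
    (p : ℝ) (μ ν : Measure X) : ℝ :=
  sInf {c : ℝ | ∃ π : Measure (X × X), π.map Prod.fst = μ ∧ π.map Prod.snd = ν ∧
    c = ∫ z, dist z.1 z.2 ^ p ∂π}

/-- The quantile function (generalized inverse CDF) of a measure on ℝ. -/
noncomputable def quantile (μ : Measure ℝ) (z : ℝ) : ℝ :=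
  sInf {x : ℝ | z ≤ ProbabilityTheory.cdf μ x}

open Set ProbabilityTheory

instance : IsProbabilityMeasure (volume.restrict (Ioo (0 : ℝ) 1)) := ⟨by simp⟩

section Quantile

variable {μ : Measure ℝ}

theorem quantile_le_iff {z x : ℝ} (hz : z ∈ Ioo 0 1) : quantile μ z ≤ x ↔ z ≤ cdf μ x := by
  set S := {x : ℝ | z ≤ cdf μ x}
  have hne : S.Nonempty := ((tendsto_cdf_atTop μ).eventually (eventually_gt_nhds hz.2)).exists.imp
    fun _ hx => hx.le
  have hbdd : BddBelow S := by
    obtain ⟨x₀, hx₀⟩ := ((tendsto_cdf_atBot μ).eventually (eventually_lt_nhds hz.1)).exists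
    exact ⟨x₀, fun x hx => le_of_not_gt fun hlt => hx₀.not_ge (hx.trans (monotone_cdf μ hlt.le))⟩
  have hmem : z ≤ cdf μ (sInf S) :=
    continuousWithinAt_const.closure_le (csInf_mem_closure hne hbdd)
      (((cdf μ).right_continuous _).mono fun _ hx => csInf_le hbdd hx) fun _ hx => hx
  exact ⟨fun h => hmem.trans (monotone_cdf μ h), fun h => csInf_le hbdd h⟩

theorem monotoneOn_quantile : MonotoneOn (quantile μ) (Ioo 0 1) := fun _ hz _ hz' hzz' =>
  (quantile_le_iff hz).2 (hzz'.trans ((quantile_le_iff hz').1 le_rfl))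

theorem aemeasurable_quantile : AEMeasurable (quantile μ) (volume.restrict (Ioo 0 1)) :=
  aemeasurable_restrict_of_monotoneOn measurableSet_Ioo monotoneOn_quantile

theorem map_quantile [IsProbabilityMeasure μ] :
    (volume.restrict (Ioo (0 : ℝ) 1)).map (quantile μ) = μ := by
  have := Measure.isProbabilityMeasure_map (aemeasurable_quantile (μ := μ))
  refine Measure.ext_of_Iic _ _ fun x => ?_
  have hpre : quantile μ ⁻¹' Iic x ∩ Ioo 0 1 = Ioo 0 1 ∩ Iic (cdf μ x) := by
    ext z
    simp only [mem_inter_iff, mem_preimage, mem_Iic]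
    exact ⟨fun h => ⟨h.2, (quantile_le_iff h.2).1 h.1⟩, fun h => ⟨(quantile_le_iff h.1).2 h.2, h.1⟩⟩
  rw [Measure.map_apply_of_aemeasurable aemeasurable_quantile measurableSet_Iic,
    Measure.restrict_apply' measurableSet_Ioo, hpre, ← ofReal_cdf]
  refine le_antisymm ?_ ?_
  · calc volume (Ioo 0 1 ∩ Iic (cdf μ x)) ≤ volume (Ioc 0 (cdf μ x)) :=
          measure_mono fun z hz => ⟨hz.1.1, hz.2⟩
      _ = _ := by simp
  · calc ENNReal.ofReal (cdf μ x) = volume (Ioo 0 (cdf μ x)) := by simp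
      _ ≤ volume (Ioo 0 1 ∩ Iic (cdf μ x)) :=
          measure_mono fun z hz => ⟨⟨hz.1, hz.2.trans_le (cdf_le_one μ x)⟩, hz.2.le⟩

end Quantile

theorem MonotoneOn.preimage_Iio_inter_subset_or {α β γ : Type*} [LinearOrder α] [Preorder β]
    [Preorder γ] {s : Set α} {f : α → β} {g : α → γ} (hf : MonotoneOn f s) (hg : MonotoneOn g s)
    (a : β) (b : γ) :
    f ⁻¹' Iio a ∩ s ⊆ g ⁻¹' Iio b ∩ s ∨ g ⁻¹' Iio b ∩ s ⊆ f ⁻¹' Iio a ∩ s := by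
  by_contra! h
  obtain ⟨⟨x, ⟨hfx, hxs⟩, hgx⟩, ⟨y, ⟨hgy, hys⟩, hfy⟩⟩ := And.imp not_subset.1 not_subset.1 h
  rcases le_total x y with hxy | hxy
  · exact hgx ⟨(hg hxs hys hxy).trans_lt hgy, hxs⟩
  · exact hfy ⟨(hf hys hxs hxy).trans_lt hfx, hys⟩

noncomputable def quantileCoupling (μ ν : Measure ℝ) : Measure (ℝ × ℝ) :=
  (volume.restrict (Ioo (0 : ℝ) 1)).map fun z => (quantile μ z, quantile ν z)

section QuantileCoupling

variable {μ ν : Measure ℝ}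

theorem aemeasurable_quantile_prod :
    AEMeasurable (fun z => (quantile μ z, quantile ν z)) (volume.restrict (Ioo 0 1)) :=
  aemeasurable_quantile.prodMk aemeasurable_quantile

instance : IsProbabilityMeasure (quantileCoupling μ ν) :=
  Measure.isProbabilityMeasure_map aemeasurable_quantile_prod

theorem integral_quantileCoupling {f : ℝ × ℝ → ℝ}
    (hf : AEStronglyMeasurable f (quantileCoupling μ ν)) :
    ∫ q, f q ∂quantileCoupling μ ν = ∫ z in Ioo 0 1, f (quantile μ z, quantile ν z) :=
  integral_map aemeasurable_quantile_prod hf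

theorem quantileCoupling_map_fst [IsProbabilityMeasure μ] :
    (quantileCoupling μ ν).map Prod.fst = μ := by
  rw [quantileCoupling, AEMeasurable.map_map_of_aemeasurable measurable_fst.aemeasurable
    aemeasurable_quantile_prod]
  exact map_quantile

theorem quantileCoupling_map_snd [IsProbabilityMeasure ν] :
    (quantileCoupling μ ν).map Prod.snd = ν := by
  rw [quantileCoupling, AEMeasurable.map_map_of_aemeasurable measurable_snd.aemeasurable
    aemeasurable_quantile_prod]
  exact map_quantile

theorem quantileCoupling_Iio_prod_Iio [IsProbabilityMeasure μ] [IsProbabilityMeasure ν]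
    (s t : ℝ) :
    quantileCoupling μ ν (Iio s ×ˢ Iio t) = min (μ (Iio s)) (ν (Iio t)) := by
  have hmarg : ∀ (ρ : Measure ℝ) [IsProbabilityMeasure ρ] (a : ℝ),
      ρ (Iio a) = volume (quantile ρ ⁻¹' Iio a ∩ Ioo 0 1) := fun ρ _ a => by
    conv_lhs => rw [← map_quantile (μ := ρ)]
    rw [Measure.map_apply_of_aemeasurable aemeasurable_quantile measurableSet_Iio,
      Measure.restrict_apply' measurableSet_Ioo]
  rw [quantileCoupling, Measure.map_apply_of_aemeasurable aemeasurable_quantile_prod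
      (measurableSet_Iio.prod measurableSet_Iio), Measure.restrict_apply' measurableSet_Ioo,
    hmarg μ, hmarg ν, mk_preimage_prod, inter_inter_distrib_right]
  rcases monotoneOn_quantile.preimage_Iio_inter_subset_or monotoneOn_quantile s t with h | h
  · rw [inter_eq_left.2 h, min_eq_left (measure_mono h)]
  · rw [inter_eq_right.2 h, min_eq_right (measure_mono h)]

end QuantileCoupling

noncomputable def StieltjesFunction.primitive (g : StieltjesFunction ℝ) (b : ℝ) : ℝ :=
  ∫ r in (0 : ℝ)..b, g r

namespace StieltjesFunction

variable (g : StieltjesFunction ℝ)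

theorem continuous_primitive : Continuous g.primitive :=
  intervalIntegral.continuous_primitive (fun _ _ => g.mono.intervalIntegrable) 0

theorem antitone_comp_sub_left (x : ℝ) : Antitone fun w => g (x - w) :=
  fun _ _ h => g.mono (by linarith)

theorem antitone_comp_neg : Antitone fun w => g (-w) :=
  fun _ _ h => g.mono (neg_le_neg h)

theorem integral_comp_sub_sub_comp_neg (x y : ℝ) :
    ∫ w in (0 : ℝ)..y, (g (x - w) - g (-w)) =
      g.primitive x - g.primitive (x - y) + g.primitive (-y) := by
  rw [intervalIntegral.integral_sub (g.antitone_comp_sub_left x).intervalIntegrable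
      g.antitone_comp_neg.intervalIntegrable, intervalIntegral.integral_comp_sub_left,
    intervalIntegral.integral_comp_neg, sub_zero, neg_zero,
    ← intervalIntegral.integral_interval_sub_left (a := 0) g.mono.intervalIntegrable
      g.mono.intervalIntegrable, intervalIntegral.integral_symm 0 (-y)]
  simp only [primitive]
  ring

end StieltjesFunction

noncomputable def orientedIndicator (a : ℝ) : ℝ → ℝ := (Ioc 0 a).indicator 1 - (Ioc a 0).indicator 1

theorem orientedIndicator_apply (a u : ℝ) :
    orientedIndicator a u = (Ioi 0).indicator 1 u - (Iio u).indicator 1 a := by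
  by_cases h0 : 0 < u <;> by_cases ha : a < u <;>
    simp [orientedIndicator, h0, ha, not_lt.1]

theorem abs_orientedIndicator (a u : ℝ) :
    |orientedIndicator a u| = SignType.sign a * orientedIndicator a u := by
  rcases lt_trichotomy a 0 with ha | rfl | ha
  · simp [orientedIndicator, Ioc_eq_empty (not_lt.2 ha.le), ha, indicator_apply]
    split_ifs <;> simp
  · simp [orientedIndicator]
  · simp [orientedIndicator, Ioc_eq_empty (not_lt.2 ha.le), ha, indicator_apply]
    split_ifs <;> simp

theorem orientedIndicator_add (a u w : ℝ) :
    orientedIndicator a (u + w) = orientedIndicator (a - w) u - orientedIndicator (-w) u := by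
  simp only [orientedIndicator_apply, indicator_apply, mem_Ioi, mem_Iio, Pi.one_apply]
  split_ifs <;> linarith

theorem integral_orientedIndicator_mul {ν : Measure ℝ} {ψ : ℝ → ℝ} {a : ℝ}
    (hψ : IntervalIntegrable ψ ν 0 a) :
    ∫ w, orientedIndicator a w * ψ w ∂ν = ∫ w in 0..a, ψ w ∂ν := by
  have h : ∀ w, orientedIndicator a w * ψ w = (Ioc 0 a).indicator ψ w - (Ioc a 0).indicator ψ w :=
    fun w => by simp [orientedIndicator, indicator_apply, sub_mul]
  simp_rw [h]
  rw [integral_sub ((integrable_indicator_iff measurableSet_Ioc).2 hψ.1)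
      ((integrable_indicator_iff measurableSet_Ioc).2 hψ.2),
    integral_indicator measurableSet_Ioc, integral_indicator measurableSet_Ioc,
    intervalIntegral]

theorem StieltjesFunction.integral_orientedIndicator (g : StieltjesFunction ℝ) (a : ℝ) :
    ∫ v, orientedIndicator a v ∂g.measure = g a - g 0 := by
  have h := integral_orientedIndicator_mul (ν := g.measure) (ψ := fun _ => 1) (a := a)
    intervalIntegrable_const
  simp only [mul_one] at h
  rw [h, intervalIntegral.integral_const',
    measureReal_def, measureReal_def, g.measure_Ioc, g.measure_Ioc, ENNReal.toReal_ofReal',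
    ENNReal.toReal_ofReal', ← neg_sub (g a) (g 0), smul_eq_mul, mul_one,
    max_zero_sub_max_neg_zero_eq_self]

theorem abs_orientedIndicator_le_one (a u : ℝ) : |orientedIndicator a u| ≤ 1 := by
  simp only [orientedIndicator_apply, indicator_apply, Pi.one_apply]
  split_ifs <;> norm_num

theorem abs_le_abs_of_orientedIndicator_ne_zero {a u : ℝ} (h : orientedIndicator a u ≠ 0) :
    |u| ≤ |a| := by
  contrapose! h
  have h₁ : u ∉ Ioc 0 a := fun ⟨h0, hua⟩ => by
    rw [abs_of_pos h0, abs_of_pos (h0.trans_le hua)] at h; linarith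
  have h₂ : u ∉ Ioc a 0 := fun ⟨hau, h0⟩ => by
    rw [abs_of_nonpos h0, abs_of_neg (hau.trans_le h0)] at h; linarith
  simp [orientedIndicator, h₁, h₂]

theorem measurable_orientedIndicator : Measurable fun p : ℝ × ℝ => orientedIndicator p.1 p.2 := by
  simp only [orientedIndicator_apply, indicator_apply, mem_Ioi, mem_Iio, Pi.one_apply]
  exact (Measurable.ite (measurableSet_lt measurable_const measurable_snd) measurable_const
    measurable_const).sub (Measurable.ite (measurableSet_lt measurable_fst measurable_snd)
    measurable_const measurable_const)

theorem integrable_orientedIndicator (ν : Measure ℝ) [IsLocallyFiniteMeasure ν] (a : ℝ) :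
    Integrable (orientedIndicator a) ν :=
  ((integrable_indicator_iff measurableSet_Ioc).2 (integrableOn_const measure_Ioc_lt_top.ne)).sub
    ((integrable_indicator_iff measurableSet_Ioc).2 (integrableOn_const measure_Ioc_lt_top.ne))

theorem StieltjesFunction.integral_orientedIndicator_add (g : StieltjesFunction ℝ) (a w : ℝ) :
    ∫ v, orientedIndicator a (v + w) ∂g.measure = g (a - w) - g (-w) := by
  simp_rw [orientedIndicator_add]
  rw [integral_sub (integrable_orientedIndicator _ _) (integrable_orientedIndicator _ _),
    g.integral_orientedIndicator, g.integral_orientedIndicator]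
  ring

noncomputable def layerKernel (x y : ℝ) (z : ℝ × ℝ) : ℝ :=
  orientedIndicator y z.1 * orientedIndicator x (z.2 + z.1)

theorem measurable_layerKernel :
    Measurable fun p : (ℝ × ℝ) × (ℝ × ℝ) => layerKernel p.1.1 p.1.2 p.2 :=
  (measurable_orientedIndicator.comp (measurable_fst.snd.prodMk measurable_snd.fst)).mul
    (measurable_orientedIndicator.comp
      (measurable_fst.fst.prodMk (measurable_snd.snd.add measurable_snd.fst)))

theorem integrable_layerKernel (ν : Measure (ℝ × ℝ)) [IsFiniteMeasureOnCompacts ν] (x y : ℝ) :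
    Integrable (layerKernel x y) ν := by
  have hbound : ∀ z, ‖layerKernel x y z‖ ≤
      (Metric.closedBall 0 (|x| + |y|)).indicator (fun _ => (1 : ℝ)) z := by
    intro z
    by_cases hz : layerKernel x y z = 0
    · simpa [hz] using indicator_nonneg (fun _ _ => zero_le_one) z
    obtain ⟨h₁, h₂⟩ := mul_ne_zero_iff.1 hz
    have hw := abs_le_abs_of_orientedIndicator_ne_zero h₁
    have hv := abs_le_abs_of_orientedIndicator_ne_zero h₂
    have hmem : z ∈ Metric.closedBall 0 (|x| + |y|) := by
      rw [mem_closedBall_zero_iff, norm_prod_le_iff, Real.norm_eq_abs, Real.norm_eq_abs]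
      have := abs_sub (z.2 + z.1) z.1
      rw [add_sub_cancel_right] at this
      constructor <;> linarith [abs_nonneg x]
    rw [indicator_of_mem hmem, Real.norm_eq_abs, layerKernel, abs_mul]
    exact mul_le_one₀ (abs_orientedIndicator_le_one _ _) (abs_nonneg _)
      (abs_orientedIndicator_le_one _ _)
  have hball : Integrable ((Metric.closedBall (0 : ℝ × ℝ) (|x| + |y|)).indicator
      (fun _ => (1 : ℝ))) ν :=
    (integrable_indicator_iff Metric.isClosed_closedBall.measurableSet).2
      (integrableOn_const (isCompact_closedBall _ _).measure_lt_top.ne)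
  have hmeas : Measurable (layerKernel x y) :=
    measurable_layerKernel.comp (measurable_prodMk_left (x := (x, y)))
  exact hball.mono' hmeas.aestronglyMeasurable (ae_of_all _ hbound)

theorem StieltjesFunction.integral_layerKernel (g : StieltjesFunction ℝ) (x y : ℝ) :
    ∫ z, layerKernel x y z ∂(volume.prod g.measure) =
      g.primitive x - g.primitive (x - y) + g.primitive (-y) := by
  rw [integral_prod _ (integrable_layerKernel _ x y)]
  simp only [layerKernel, integral_const_mul, g.integral_orientedIndicator_add]
  rw [integral_orientedIndicator_mul ((g.antitone_comp_sub_left x).intervalIntegrable.sub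
    g.antitone_comp_neg.intervalIntegrable), g.integral_comp_sub_sub_comp_neg]

theorem StieltjesFunction.integral_norm_layerKernel_le (g : StieltjesFunction ℝ) (x y : ℝ) :
    ∫ z, ‖layerKernel x y z‖ ∂(volume.prod g.measure) ≤
      |g.primitive x - g.primitive (x - y) + g.primitive (-y)| := by
  have habs_sign : ∀ a : ℝ, |(SignType.sign a : ℝ)| ≤ 1 := fun a => by
    rcases lt_trichotomy a 0 with h | h | h <;> simp [h]
  -- `layerKernel x y` has constant sign `sign y * sign x`.
  have hnorm : ∀ z, ‖layerKernel x y z‖ =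
      (SignType.sign y * SignType.sign x : ℝ) * layerKernel x y z := fun z => by
    rw [Real.norm_eq_abs, layerKernel, abs_mul, abs_orientedIndicator, abs_orientedIndicator]
    ring
  simp_rw [hnorm]
  rw [integral_const_mul, g.integral_layerKernel]
  refine (le_abs_self _).trans ?_
  rw [abs_mul, abs_mul]
  exact mul_le_of_le_one_left (abs_nonneg _)
    (mul_le_one₀ (habs_sign y) (abs_nonneg _) (habs_sign x))

theorem measure_prod_le_min_map {α β : Type*} [MeasurableSpace α] [MeasurableSpace β]
    (π : Measure (α × β)) (s : Set α) (t : Set β) :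
    π (s ×ˢ t) ≤ min (π.map Prod.fst s) (π.map Prod.snd t) :=
  le_min ((measure_mono (prod_subset_preimage_fst s t)).trans
      (Measure.le_map_apply measurable_fst.aemeasurable s))
    ((measure_mono (prod_subset_preimage_snd s t)).trans
      (Measure.le_map_apply measurable_snd.aemeasurable t))

theorem integral_orientedIndicator_mul_orientedIndicator {μ ν : Measure ℝ}
    {π : Measure (ℝ × ℝ)} [IsProbabilityMeasure π] (hfst : π.map Prod.fst = μ)
    (hsnd : π.map Prod.snd = ν) (s t : ℝ) :
    ∫ q, orientedIndicator q.2 t * orientedIndicator q.1 s ∂π =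
      π.real (Iio s ×ˢ Iio t) - (Ioi 0).indicator 1 t * μ.real (Iio s)
        - (Ioi 0).indicator 1 s * ν.real (Iio t)
        + (Ioi 0).indicator 1 s * (Ioi 0).indicator 1 t := by
  have hA : MeasurableSet (Prod.fst ⁻¹' Iio s : Set (ℝ × ℝ)) := measurable_fst measurableSet_Iio
  have hB : MeasurableSet (Prod.snd ⁻¹' Iio t : Set (ℝ × ℝ)) := measurable_snd measurableSet_Iio
  have hpt : ∀ q : ℝ × ℝ, orientedIndicator q.2 t * orientedIndicator q.1 s =
      (Prod.fst ⁻¹' Iio s ∩ Prod.snd ⁻¹' Iio t).indicator 1 q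
        - (Ioi 0).indicator 1 t * (Prod.fst ⁻¹' Iio s).indicator 1 q
        - (Ioi 0).indicator 1 s * (Prod.snd ⁻¹' Iio t).indicator 1 q
        + (Ioi 0).indicator 1 s * (Ioi 0).indicator 1 t := fun q => by
    by_cases h₁ : q.1 < s <;> by_cases h₂ : q.2 < t <;> by_cases hs : 0 < s <;>
      by_cases ht : 0 < t <;> simp [orientedIndicator_apply, h₁, h₂, hs, ht]
  have hint : ∀ {C : Set (ℝ × ℝ)}, MeasurableSet C → Integrable (C.indicator 1) π :=
    fun hC => (integrable_const (1 : ℝ)).indicator hC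
  have hAB := hint (hA.inter hB)
  have hA' := (hint hA).const_mul ((Ioi 0).indicator 1 t)
  have hB' := (hint hB).const_mul ((Ioi 0).indicator 1 s)
  simp_rw [hpt]
  rw [integral_add ?_ (integrable_const _), integral_sub ?_ hB', integral_sub hAB hA',
    integral_const_mul, integral_const_mul,
    integral_indicator_one (hA.inter hB), integral_indicator_one hA, integral_indicator_one hB,
    integral_const, ← hfst, ← hsnd, map_measureReal_apply measurable_fst measurableSet_Iio,
    map_measureReal_apply measurable_snd measurableSet_Iio, ← prod_eq]
  · simp
  · exact hAB.sub hA'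
  · exact (hAB.sub hA').sub hB'

section CouplingCost

variable (g : StieltjesFunction ℝ) {μ ν : Measure ℝ} {π : Measure (ℝ × ℝ)}

theorem integrable_layerKernel_prod [SFinite π] (hfst : π.map Prod.fst = μ)
    (hsnd : π.map Prod.snd = ν) (hμ : Integrable (fun x => g.primitive x) μ)
    (hν : Integrable (fun y => g.primitive (-y)) ν)
    (hπ : Integrable (fun q => g.primitive (q.1 - q.2)) π) :
    Integrable (fun p : (ℝ × ℝ) × (ℝ × ℝ) => layerKernel p.1.1 p.1.2 p.2)
      (π.prod (volume.prod g.measure)) := by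
  have h₁ : Integrable (fun q : ℝ × ℝ => g.primitive q.1) π :=
    (hfst ▸ hμ).comp_measurable measurable_fst
  have h₂ : Integrable (fun q : ℝ × ℝ => g.primitive (-q.2)) π :=
    (hsnd ▸ hν).comp_measurable measurable_snd
  refine (integrable_prod_iff measurable_layerKernel.aestronglyMeasurable).2
    ⟨ae_of_all _ fun q => integrable_layerKernel _ q.1 q.2, ?_⟩
  refine ((h₁.sub hπ).add h₂).abs.mono'
    measurable_layerKernel.norm.aestronglyMeasurable.integral_prod_right' (ae_of_all _ fun q => ?_)
  rw [Real.norm_eq_abs, abs_of_nonneg (integral_nonneg fun _ => norm_nonneg _)]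
  exact g.integral_norm_layerKernel_le q.1 q.2

theorem integral_primitive_sub_eq [SFinite π] (hfst : π.map Prod.fst = μ)
    (hsnd : π.map Prod.snd = ν) (hμ : Integrable (fun x => g.primitive x) μ)
    (hν : Integrable (fun y => g.primitive (-y)) ν)
    (hπ : Integrable (fun q => g.primitive (q.1 - q.2)) π) :
    ∫ q, g.primitive (q.1 - q.2) ∂π = ∫ x, g.primitive x ∂μ + ∫ y, g.primitive (-y) ∂ν
      - ∫ z, ∫ q, layerKernel q.1 q.2 z ∂π ∂(volume.prod g.measure) := by
  have hK := integrable_layerKernel_prod g hfst hsnd hμ hν hπ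
  have h₁ : Integrable (fun q : ℝ × ℝ => g.primitive q.1) π :=
    (hfst ▸ hμ).comp_measurable measurable_fst
  have h₂ : Integrable (fun q : ℝ × ℝ => g.primitive (-q.2)) π :=
    (hsnd ▸ hν).comp_measurable measurable_snd
  have hpt : ∀ q : ℝ × ℝ, g.primitive (q.1 - q.2) = g.primitive q.1 + g.primitive (-q.2)
      - ∫ z, layerKernel q.1 q.2 z ∂(volume.prod g.measure) := fun q => by
    rw [g.integral_layerKernel]; ring
  simp_rw [hpt]
  rw [integral_sub ?_ hK.integral_prod_left, integral_add h₁ h₂,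
    integral_integral_swap (f := fun q z : ℝ × ℝ => layerKernel q.1 q.2 z) hK, ← hfst, ← hsnd,
    integral_map measurable_fst.aemeasurable g.continuous_primitive.aestronglyMeasurable,
    integral_map measurable_snd.aemeasurable
      (f := fun y => g.primitive (-y))
      (g.continuous_primitive.comp continuous_neg).aestronglyMeasurable]
  exact h₁.add h₂

theorem integral_primitive_sub_quantileCoupling_le [IsProbabilityMeasure μ]
    [IsProbabilityMeasure ν] [IsProbabilityMeasure π]
    (hfst : π.map Prod.fst = μ) (hsnd : π.map Prod.snd = ν)
    (hμ : Integrable (fun x => g.primitive x) μ) (hν : Integrable (fun y => g.primitive (-y)) ν)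
    (hπ : Integrable (fun q => g.primitive (q.1 - q.2)) π)
    (hQ : Integrable (fun q => g.primitive (q.1 - q.2)) (quantileCoupling μ ν)) :
    ∫ q, g.primitive (q.1 - q.2) ∂quantileCoupling μ ν ≤ ∫ q, g.primitive (q.1 - q.2) ∂π := by
  have hQfst := quantileCoupling_map_fst (μ := μ) (ν := ν)
  have hQsnd := quantileCoupling_map_snd (μ := μ) (ν := ν)
  rw [integral_primitive_sub_eq g hQfst hQsnd hμ hν hQ,
    integral_primitive_sub_eq g hfst hsnd hμ hν hπ]
  refine sub_le_sub_left (integral_mono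
    (integrable_layerKernel_prod g hfst hsnd hμ hν hπ).integral_prod_right
    (integrable_layerKernel_prod g hQfst hQsnd hμ hν hQ).integral_prod_right fun z => ?_) _
  have hjoint : π.real (Iio (z.2 + z.1) ×ˢ Iio z.1)
      ≤ (quantileCoupling μ ν).real (Iio (z.2 + z.1) ×ˢ Iio z.1) := by
    refine ENNReal.toReal_mono (measure_ne_top _ _) ?_
    rw [quantileCoupling_Iio_prod_Iio, ← hfst, ← hsnd]
    exact measure_prod_le_min_map π _ _
  simp only [layerKernel]
  rw [integral_orientedIndicator_mul_orientedIndicator hfst hsnd,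
    integral_orientedIndicator_mul_orientedIndicator hQfst hQsnd]
  linarith

end CouplingCost

/-- The right derivative of `|r| ^ p`. At `r = 0` it is `p * 0 ^ (p - 1)`, which for `p = 1` is `1`
(as `0 ^ 0 = 1`), so it is right-continuous there. -/
noncomputable def absRpowDeriv (p : ℝ) (hp : 1 ≤ p) : StieltjesFunction ℝ where
  toFun r := if 0 ≤ r then p * r ^ (p - 1) else -(p * (-r) ^ (p - 1))
  mono' := by
    have hp₁ : 0 ≤ p - 1 := by linarith
    have hmono : ∀ {r s : ℝ}, 0 ≤ r → r ≤ s → p * r ^ (p - 1) ≤ p * s ^ (p - 1) :=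
      fun hr hrs => by gcongr
    have hnonneg : ∀ r : ℝ, 0 ≤ r → 0 ≤ p * r ^ (p - 1) := fun r hr => by positivity
    intro a b hab
    dsimp only
    split_ifs with ha hb hb
    · exact hmono ha hab
    · exact absurd (ha.trans hab) hb
    · linarith [hnonneg (-a) (by linarith), hnonneg b hb]
    · exact neg_le_neg (hmono (by linarith) (by linarith))
  right_continuous' x := by
    rcases le_or_gt 0 x with hx | hx
    · have hcont : ContinuousAt (fun r : ℝ => p * r ^ (p - 1)) x :=
        (Real.continuousAt_rpow_const x (p - 1) (Or.inr (by linarith))).const_mul p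
      exact hcont.continuousWithinAt.congr (fun y hy => if_pos (hx.trans hy)) (if_pos hx)
    · have hcont : ContinuousAt (fun r : ℝ => -(p * (-r) ^ (p - 1))) x :=
        (((Real.continuousAt_rpow_const (-x) (p - 1) (Or.inl (by linarith))).comp
          continuousAt_neg).const_mul p).neg
      refine (hcont.congr ?_).continuousWithinAt
      filter_upwards [Iio_mem_nhds hx] with y hy
      exact (if_neg (not_le.2 hy)).symm

theorem integral_mul_rpow_sub_one {p : ℝ} (hp : 1 ≤ p) (c : ℝ) :
    ∫ u in (0 : ℝ)..c, p * u ^ (p - 1) = c ^ p := by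
  rw [intervalIntegral.integral_const_mul, integral_rpow (Or.inl (by linarith)), sub_add_cancel,
    Real.zero_rpow (by linarith), sub_zero, mul_div_cancel₀ _ (by linarith)]

theorem primitive_absRpowDeriv {p : ℝ} (hp : 1 ≤ p) (b : ℝ) :
    (absRpowDeriv p hp).primitive b = |b| ^ p := by
  have hg : ∀ r, absRpowDeriv p hp r =
      if 0 ≤ r then p * r ^ (p - 1) else -(p * (-r) ^ (p - 1)) := fun _ => rfl
  rcases le_or_gt 0 b with hb | hb
  · rw [abs_of_nonneg hb, StieltjesFunction.primitive, ← integral_mul_rpow_sub_one hp b]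
    refine intervalIntegral.integral_congr fun r hr => ?_
    rw [uIcc_of_le hb] at hr
    exact (hg r).trans (if_pos hr.1)
  · have hneg : ∫ u in (0 : ℝ)..(-b), absRpowDeriv p hp (-u) = -(-b) ^ p := by
      rw [← integral_mul_rpow_sub_one hp, ← intervalIntegral.integral_neg]
      refine intervalIntegral.integral_congr_ae (ae_of_all _ fun u hu => ?_)
      rw [uIoc_of_le (by linarith)] at hu
      rw [hg, if_neg (by linarith [hu.1]), neg_neg]
    rw [intervalIntegral.integral_comp_neg, neg_neg, neg_zero, intervalIntegral.integral_symm]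
      at hneg
    rw [abs_of_neg hb, StieltjesFunction.primitive]
    linarith

theorem integrable_abs_sub_rpow {p : ℝ} (hp : 0 < p) {μ ν : Measure ℝ} {π : Measure (ℝ × ℝ)}
    (hfst : π.map Prod.fst = μ) (hsnd : π.map Prod.snd = ν)
    (hμ : Integrable (fun x : ℝ => |x| ^ p) μ) (hν : Integrable (fun x : ℝ => |x| ^ p) ν) :
    Integrable (fun q : ℝ × ℝ => |q.1 - q.2| ^ p) π := by
  have hp' : ENNReal.ofReal p ≠ 0 := by simpa using hp
  have hmemLp : ∀ {ρ : Measure ℝ}, Integrable (fun x : ℝ => |x| ^ p) ρ →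
      MemLp id (ENNReal.ofReal p) ρ := fun h => by
    rw [← integrable_norm_rpow_iff aestronglyMeasurable_id hp' ENNReal.ofReal_ne_top]
    simpa [ENNReal.toReal_ofReal hp.le] using h
  have h₁ : MemLp Prod.fst (ENNReal.ofReal p) π :=
    (hmemLp (hfst ▸ hμ)).comp_of_map measurable_fst.aemeasurable
  have h₂ : MemLp Prod.snd (ENNReal.ofReal p) π :=
    (hmemLp (hsnd ▸ hν)).comp_of_map measurable_snd.aemeasurable
  simpa [ENNReal.toReal_ofReal hp.le] using
    (integrable_norm_rpow_iff (h₁.sub h₂).1 hp' ENNReal.ofReal_ne_top).2 (h₁.sub h₂)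

theorem integral_abs_sub_rpow_quantileCoupling_le {p : ℝ} (hp : 1 ≤ p) {μ ν : Measure ℝ}
    [IsProbabilityMeasure μ] [IsProbabilityMeasure ν] {π : Measure (ℝ × ℝ)}
    [IsProbabilityMeasure π] (hfst : π.map Prod.fst = μ) (hsnd : π.map Prod.snd = ν)
    (hμ : Integrable (fun x : ℝ => |x| ^ p) μ) (hν : Integrable (fun x : ℝ => |x| ^ p) ν) :
    ∫ q, |q.1 - q.2| ^ p ∂quantileCoupling μ ν ≤ ∫ q, |q.1 - q.2| ^ p ∂π := by
  have hp₀ : 0 < p := by linarith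
  have := integral_primitive_sub_quantileCoupling_le (absRpowDeriv p hp) hfst hsnd
  simp only [primitive_absRpowDeriv, abs_neg] at this
  exact this hμ hν (integrable_abs_sub_rpow hp₀ hfst hsnd hμ hν)
    (integrable_abs_sub_rpow hp₀ quantileCoupling_map_fst quantileCoupling_map_snd hμ hν)

/-- One-dimensional Wasserstein distance via quantile functions:
`W_p^p(μ, ν) = ∫_0^1 |F_μ⁻¹(z) − F_ν⁻¹(z)|^p dz`. -/
theorem wasserstein_one_dim_quantile
    (p : ℝ) (hp : 1 ≤ p) (μ ν : Measure ℝ)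
    [IsProbabilityMeasure μ] [IsProbabilityMeasure ν]
    (hμ : Integrable (fun x : ℝ => |x| ^ p) μ)
    (hν : Integrable (fun x : ℝ => |x| ^ p) ν) :
    WpPow p μ ν = ∫ z in Set.Ioo (0 : ℝ) 1, |quantile μ z - quantile ν z| ^ p := by
  have hcost : Measurable fun q : ℝ × ℝ => dist q.1 q.2 ^ p := by fun_prop
  have hquantile : ∫ q, dist q.1 q.2 ^ p ∂quantileCoupling μ ν =
      ∫ z in Ioo 0 1, |quantile μ z - quantile ν z| ^ p := by
    rw [integral_quantileCoupling hcost.aestronglyMeasurable]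
    simp only [Real.dist_eq]
  have hoptimal : ∀ π : Measure (ℝ × ℝ), π.map Prod.fst = μ → π.map Prod.snd = ν →
      ∫ q, dist q.1 q.2 ^ p ∂quantileCoupling μ ν ≤ ∫ q, dist q.1 q.2 ^ p ∂π := by
    intro π hfst hsnd
    have : IsProbabilityMeasure (π.map Prod.fst) := hfst ▸ inferInstance
    have : IsProbabilityMeasure π := Measure.isProbabilityMeasure_of_map Prod.fst
    simpa only [Real.dist_eq] using
      integral_abs_sub_rpow_quantileCoupling_le hp hfst hsnd hμ hν
  rw [WpPow, ← hquantile]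
  exact IsLeast.csInf_eq ⟨⟨_, quantileCoupling_map_fst, quantileCoupling_map_snd, rfl⟩,
    by rintro c ⟨π, hfst, hsnd, rfl⟩; exact hoptimal π hfst hsnd⟩
end

section
/- (Cramér–Wold) Two probability measures P and Q on ℝ^k are equal if and only if for every vector ψ ∈ ℝ^k, the pushforwards of P and Q under the linear map x ↦ ⟨ψ, x⟩ are equal as probability measures on ℝ. -/
open MeasureTheory
open scoped RealInnerProductSpace

lemma charFun_eq_charFun_map_inner_one {E : Type*} [SeminormedAddCommGroup E]
    [InnerProductSpace ℝ E] [MeasurableSpace E] [OpensMeasurableSpace E] (μ : Measure E) (t : E) :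
    charFun μ t = charFun (μ.map (fun x => ⟪t, x⟫)) 1 := by
  rw [charFun_apply, charFun_apply_real, integral_map (by fun_prop) (by fun_prop)]
  simp [real_inner_comm]

/-- Cramér–Wold: two probability measures on ℝ^k are equal iff all of their
one-dimensional linear projections agree. -/
theorem cramer_wold
    {k : ℕ} (P Q : Measure (EuclideanSpace ℝ (Fin k)))
    [IsProbabilityMeasure P] [IsProbabilityMeasure Q] :
    P = Q ↔ ∀ ψ : EuclideanSpace ℝ (Fin k),
      P.map (fun x => ⟪ψ, x⟫) = Q.map (fun x => ⟪ψ, x⟫) := by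
  refine ⟨fun hPQ _ => hPQ ▸ rfl, fun h => Measure.ext_of_charFun (funext fun ψ => ?_)⟩
  rw [charFun_eq_charFun_map_inner_one P, charFun_eq_charFun_map_inner_one Q, h ψ]
end
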